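/- Let K be a field and consider the polynomial ring R = K[x_ξ, x_a, x_b, x_c, x_d, x_ζ]. The join-meet ideal of the pentagon lattice N₅ = {ξ, a, b, c, ζ} with ξ < a < ζ, ξ < b < c < ζ, and a incomparable to b and c, generated by {x_a x_b − x_ζ x_ξ, x_a x_c − x_ζ x_ξ}, is a radical ideal. -/
import Mathlib

open MvPolynomial

/-- The variables of `K[x_ξ, x_a, x_b, x_c, x_d, x_ζ]`. -/
inductive V19 : Type where
  | xi | a | b | c | d | zeta
deriving DecidableEq

namespace N5Aux

variable {K : Type*} [Field K]

/-- Substitution remainder lemma: `f - f∘σ` lies in the ideal generated by `X v - σ v`. -/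
lemma sub_aeval_mem {σ : Type*} (g : σ → MvPolynomial σ K) (f : MvPolynomial σ K) :
    f - aeval g f ∈ Ideal.span (Set.range fun v => X v - g v) := by
  induction f using MvPolynomial.induction_on with
  | C k => simp
  | add p q hp hq =>
      have h : p + q - aeval g (p + q) = (p - aeval g p) + (q - aeval g q) := by
        rw [map_add]; ring
      rw [h]; exact add_mem hp hq
  | mul_X p v hp =>
      have h : p * X v - aeval g (p * X v)
          = (p - aeval g p) * X v + aeval g p * (X v - g v) := by
        rw [map_mul, aeval_X]; ring
      rw [h]
      exact add_mem (Ideal.mul_mem_right _ _ hp)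
        (Ideal.mul_mem_left _ _ (Ideal.subset_span ⟨v, rfl⟩))

lemma primeX {σ : Type*} [DecidableEq σ] (v : σ) : Prime (X v : MvPolynomial σ K) := by
  rw [← Ideal.span_singleton_prime (X_ne_zero v)]
  set g : σ → MvPolynomial σ K := fun w => if w = v then 0 else X w with hg
  have hker : Ideal.span {(X v : MvPolynomial σ K)} = RingHom.ker (aeval g) := by
    apply le_antisymm
    · rw [Ideal.span_le, Set.singleton_subset_iff]
      show aeval g (X v) = 0
      simp [g]
    · intro f hf
      have h2 : aeval g f = 0 := hf
      have h1 := sub_aeval_mem g f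
      rw [h2, sub_zero] at h1
      refine Ideal.span_le.mpr ?_ h1
      rintro _ ⟨w, rfl⟩
      by_cases hw : w = v
      · subst hw
        simp only [g, if_pos rfl, sub_zero]
        exact Ideal.subset_span rfl
      · simp only [g, if_neg hw, sub_self]
        exact zero_mem _
  rw [hker]
  exact RingHom.ker_isPrime _

lemma X_not_dvd_X {σ : Type*} [DecidableEq σ] {i j : σ} (h : i ≠ j) :
    ¬ (X i : MvPolynomial σ K) ∣ X j := by
  rintro ⟨t, ht⟩
  have h2 := congrArg (aeval (fun w => if w = i then 0 else X w) :
      MvPolynomial σ K →ₐ[K] MvPolynomial σ K) ht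
  simp only [map_mul, aeval_X, if_pos rfl, if_neg (Ne.symm h), zero_mul, ite_true, if_true] at h2
  exact X_ne_zero j h2


/-- A linear polynomial `C u * X - C w` with `u` prime and `u ∤ w` is irreducible. -/
lemma irreducible_linear {S : Type*} [CommRing S] [IsDomain S] {u w : S}
    (hu : Prime u) (huw : ¬ u ∣ w) :
    Irreducible (Polynomial.C u * Polynomial.X - Polynomial.C w) := by
  set p : Polynomial S := Polynomial.C u * Polynomial.X - Polynomial.C w with hp
  have hrw : p = Polynomial.C u * Polynomial.X + Polynomial.C (-w) := by
    rw [map_neg]; ring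
  have hdeg : p.degree = 1 := by rw [hrw]; exact Polynomial.degree_linear hu.ne_zero
  have hndeg : p.natDegree = 1 := by rw [hrw]; exact Polynomial.natDegree_linear hu.ne_zero
  have hp0 : p ≠ 0 := fun h => by simp [h] at hdeg
  have hc1 : p.coeff 1 = u := by
    rw [hrw]; simp
  have hc0 : p.coeff 0 = -w := by
    rw [hrw]; simp
  have key : ∀ g h : Polynomial S, p = g * h → g.natDegree = 0 → IsUnit g := by
    intro g h hgh hg0
    have hgC : g = Polynomial.C (g.coeff 0) := Polynomial.eq_C_of_natDegree_eq_zero hg0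
    have hdvd : Polynomial.C (g.coeff 0) ∣ p := ⟨h, by rw [← hgC, hgh]⟩
    rw [Polynomial.C_dvd_iff_dvd_coeff] at hdvd
    have hdu : g.coeff 0 ∣ u := hc1 ▸ hdvd 1
    have hdw : g.coeff 0 ∣ -w := hc0 ▸ hdvd 0
    obtain ⟨t, htu⟩ := hdu
    rcases hu.irreducible.isUnit_or_isUnit htu with h1 | h1
    · rw [hgC]; exact Polynomial.isUnit_C.mpr h1
    · exfalso
      apply huw
      rw [← dvd_neg]
      obtain ⟨s, hs⟩ := h1.exists_right_inv
      have : u ∣ g.coeff 0 := ⟨s, by rw [htu, mul_assoc, hs, mul_one]⟩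
      exact this.trans hdw
  constructor
  · intro hunit
    rw [Polynomial.degree_eq_zero_of_isUnit hunit] at hdeg
    exact zero_ne_one hdeg
  · intro g h hgh
    have hg0 : g ≠ 0 := fun h' => hp0 (by rw [hgh, h', zero_mul])
    have hh0 : h ≠ 0 := fun h' => hp0 (by rw [hgh, h', mul_zero])
    have hsum : g.natDegree + h.natDegree = 1 := by
      rw [← Polynomial.natDegree_mul hg0 hh0, ← hgh, hndeg]
    rcases Nat.eq_zero_or_pos g.natDegree with h1 | h1
    · exact Or.inl (key g h hgh h1)
    · have h2 : h.natDegree = 0 := by omega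
      exact Or.inr (key h g (by rw [hgh, mul_comm]) h2)

/-- The identification of `V19` with `Option (Fin 5)`, sending `a` to `none`. -/
def eV : V19 ≃ Option (Fin 5) where
  toFun v := match v with
    | V19.a => none
    | V19.xi => some 0
    | V19.b => some 1
    | V19.c => some 2
    | V19.d => some 3
    | V19.zeta => some 4
  invFun o := match o with
    | none => V19.a
    | some 0 => V19.xi
    | some 1 => V19.b
    | some 2 => V19.c
    | some 3 => V19.d
    | some 4 => V19.zeta
  left_inv v := by cases v <;> rfl
  right_inv o := by revert o; decide

lemma prime_q :
    Prime (X V19.a * X V19.c - X V19.zeta * X V19.xi : MvPolynomial V19 K) := by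
  rw [← UniqueFactorizationMonoid.irreducible_iff_prime]
  have hEq : ((renameEquiv K eV).trans (optionEquivLeft K (Fin 5)))
      (X V19.a * X V19.c - X V19.zeta * X V19.xi) =
      Polynomial.C (X 2) * Polynomial.X -
        Polynomial.C (X 4 * X 0 : MvPolynomial (Fin 5) K) := by
    simp only [AlgEquiv.trans_apply, renameEquiv_apply, map_sub, map_mul, rename_X,
      show eV V19.a = none from rfl, show eV V19.c = some 2 from rfl,
      show eV V19.zeta = some 4 from rfl, show eV V19.xi = some 0 from rfl,
      optionEquivLeft_X_none, optionEquivLeft_X_some]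
    ring
  refine (MulEquiv.irreducible_iff ((renameEquiv K eV).trans (optionEquivLeft K (Fin 5)))).mp ?_
  rw [hEq]
  apply irreducible_linear (primeX 2)
  intro hdvd
  rcases (primeX (K := K) 2).2.2 _ _ hdvd with h | h
  · exact X_not_dvd_X (by decide) h
  · exact X_not_dvd_X (by decide) h

section Main

variable (K : Type*) [Field K]

local notation "A" => (X V19.a : MvPolynomial V19 K)
local notation "B" => (X V19.b : MvPolynomial V19 K)
local notation "Cc" => (X V19.c : MvPolynomial V19 K)
local notation "Z" => (X V19.zeta : MvPolynomial V19 K)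
local notation "Xi" => (X V19.xi : MvPolynomial V19 K)
/-- The substitution `x_a ↦ 0`. -/
noncomputable def piA : MvPolynomial V19 K →ₐ[K] MvPolynomial V19 K :=
  aeval (fun v => if v = V19.a then 0 else X v)

lemma piA_apply (f : MvPolynomial V19 K) :
    piA K f = aeval (fun v => if v = V19.a then 0 else X v) f := rfl

lemma piA_X (v : V19) : piA K (X v) = if v = V19.a then 0 else X v := aeval_X _ v

/-- The substitution `x_b ↦ x_c`. -/
noncomputable def tauB : MvPolynomial V19 K →ₐ[K] MvPolynomial V19 K :=
  aeval (fun v => if v = V19.b then X V19.c else X v)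

lemma X_not_dvd_sub {i : V19} (hib : i ≠ V19.b) (hic : i ≠ V19.c) :
    ¬ (X i : MvPolynomial V19 K) ∣ (X V19.b - X V19.c) := by
  rintro ⟨t, ht⟩
  have h2 := congrArg (aeval (fun w => if w = i then 0 else X w) :
      MvPolynomial V19 K →ₐ[K] MvPolynomial V19 K) ht
  simp only [map_sub, map_mul, aeval_X, if_pos rfl, if_neg (Ne.symm hib), if_neg (Ne.symm hic),
    zero_mul, ite_true, if_true] at h2
  have h3 := sub_eq_zero.mp h2
  exact (by decide : V19.b ≠ V19.c) (X_injective h3)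

lemma ZXi_dvd {g : MvPolynomial V19 K}
    (h : Z * Xi ∣ g * (B - Cc)) : Z * Xi ∣ g := by
  have hz : Z ∣ g := by
    rcases (primeX V19.zeta).2.2 g (B - Cc) ((dvd_mul_right Z Xi).trans h) with h1 | h1
    · exact h1
    · exact absurd h1 (X_not_dvd_sub K (by decide) (by decide))
  obtain ⟨t, rfl⟩ := hz
  have h2 : Z * (Xi) ∣ Z * (t * (B - Cc)) := by
    rw [← mul_assoc]
    exact h
  have h3 : Xi ∣ t * (B - Cc) :=
    (mul_dvd_mul_iff_left (X_ne_zero V19.zeta)).mp h2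
  rcases (primeX V19.xi).2.2 t (B - Cc) h3 with h4 | h4
  · exact mul_dvd_mul_left Z h4
  · exact absurd h4 (X_not_dvd_sub K (by decide) (by decide))

lemma ZXi_dvd_pow {f : MvPolynomial V19 K} {n : ℕ}
    (h : Z * Xi ∣ f ^ n) : Z * Xi ∣ f := by
  have hz : Z ∣ f := (primeX V19.zeta).dvd_of_dvd_pow ((dvd_mul_right Z Xi).trans h)
  obtain ⟨t, rfl⟩ := hz
  have hxi : Xi ∣ Z * t := (primeX V19.xi).dvd_of_dvd_pow ((dvd_mul_left Xi Z).trans h)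
  rcases (primeX V19.xi).2.2 Z t hxi with h1 | h1
  · exact absurd h1 (X_not_dvd_X (by decide))
  · exact mul_dvd_mul_left Z h1

lemma tauB_apply (f : MvPolynomial V19 K) :
    tauB K f = aeval (fun v => if v = V19.b then X V19.c else X v) f := rfl

lemma tauB_X (v : V19) : tauB K (X v) = if v = V19.b then X V19.c else X v := aeval_X _ v

lemma sub_pi_mem (f : MvPolynomial V19 K) :
    f - (piA K) f ∈ Ideal.span {(X V19.a : MvPolynomial V19 K)} := by
  rw [piA_apply]
  refine Ideal.span_le.mpr ?_ (sub_aeval_mem _ f)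
  rintro _ ⟨w, rfl⟩
  cases w <;> simp [Ideal.mem_span_singleton]

lemma sub_tau_mem (f : MvPolynomial V19 K) :
    f - (tauB K) f ∈ Ideal.span {(X V19.b - X V19.c : MvPolynomial V19 K)} := by
  rw [tauB_apply]
  refine Ideal.span_le.mpr ?_ (sub_aeval_mem _ f)
  rintro _ ⟨w, rfl⟩
  cases w <;> simp [Ideal.mem_span_singleton]

lemma hP1 : (Ideal.span {A, Z * Xi}).IsRadical := by
  rintro f ⟨n, hn⟩
  obtain ⟨u, v, huv⟩ := Ideal.mem_span_pair.mp hn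
  have hc := congrArg (piA K) huv
  simp only [map_add, map_mul, map_pow, piA_X] at hc
  simp only [show (if V19.a = V19.a then (0 : MvPolynomial V19 K) else X V19.a) = 0 from rfl,
    show (if V19.zeta = V19.a then (0 : MvPolynomial V19 K) else X V19.zeta) = Z from rfl,
    show (if V19.xi = V19.a then (0 : MvPolynomial V19 K) else X V19.xi) = Xi from rfl,
    mul_zero, zero_add, ite_true, if_true] at hc
  -- hc : (piA K) v * (Z * Xi) = ((piA K) f) ^ n
  have h1 : Z * Xi ∣ (piA K) f := ZXi_dvd_pow K ⟨(piA K) v, by rw [← hc]; ring⟩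
  obtain ⟨t, ht⟩ := h1
  have h2 := sub_pi_mem K f
  have h3 : f = (f - (piA K) f) + (Z * Xi) * t := by rw [← ht]; ring
  rw [h3]
  refine add_mem (Ideal.span_mono ?_ h2) (Ideal.mul_mem_right _ _ (Ideal.subset_span ?_))
  · exact Set.singleton_subset_iff.mpr (Set.mem_insert _ _)
  · exact Set.mem_insert_of_mem _ rfl

lemma hP2 : (Ideal.span {B - Cc, A * B - Z * Xi}).IsRadical := by
  rintro f ⟨n, hn⟩
  obtain ⟨g, h, hgh⟩ := Ideal.mem_span_pair.mp hn
  have hc := congrArg (tauB K) hgh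
  simp only [map_add, map_mul, map_sub, map_pow, tauB_X] at hc
  simp only [show (if V19.a = V19.b then (Cc : MvPolynomial V19 K) else X V19.a) = A from rfl,
    show (if V19.b = V19.b then (Cc : MvPolynomial V19 K) else X V19.b) = Cc from rfl,
    show (if V19.c = V19.b then (Cc : MvPolynomial V19 K) else X V19.c) = Cc from rfl,
    show (if V19.zeta = V19.b then (Cc : MvPolynomial V19 K) else X V19.zeta) = Z from rfl,
    show (if V19.xi = V19.b then (Cc : MvPolynomial V19 K) else X V19.xi) = Xi from rfl,
    ite_true, if_true, sub_self, mul_zero, zero_add] at hc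
  -- hc : (tauB K) h * (A * Cc - Z * Xi) = ((tauB K) f) ^ n
  have h1 : (A * Cc - Z * Xi) ∣ (tauB K) f :=
    (prime_q (K := K)).dvd_of_dvd_pow ⟨(tauB K) h, by rw [← hc]; ring⟩
  obtain ⟨t, ht⟩ := h1
  have h2 := sub_tau_mem K f
  have h3 : f = (f - (tauB K) f) + (A * Cc - Z * Xi) * t := by rw [← ht]; ring
  rw [h3]
  refine add_mem (Ideal.span_mono ?_ h2) (Ideal.mul_mem_right _ _ ?_)
  · exact Set.singleton_subset_iff.mpr (Set.mem_insert _ _)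
  · exact Ideal.mem_span_pair.mpr ⟨-A, 1, by ring⟩

lemma span_eq_inf :
    Ideal.span {A * B - Z * Xi, A * Cc - Z * Xi} =
      Ideal.span {A, Z * Xi} ⊓ Ideal.span {B - Cc, A * B - Z * Xi} := by
  apply le_antisymm
  · apply le_inf
    · rw [Ideal.span_le]
      rintro x hx
      simp only [Set.mem_insert_iff, Set.mem_singleton_iff] at hx
      rcases hx with rfl | rfl
      · exact Ideal.mem_span_pair.mpr ⟨B, -1, by ring⟩
      · exact Ideal.mem_span_pair.mpr ⟨Cc, -1, by ring⟩
    · rw [Ideal.span_le]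
      rintro x hx
      simp only [Set.mem_insert_iff, Set.mem_singleton_iff] at hx
      rcases hx with rfl | rfl
      · exact Ideal.mem_span_pair.mpr ⟨0, 1, by ring⟩
      · exact Ideal.mem_span_pair.mpr ⟨-A, 1, by ring⟩
  · rintro f ⟨hf1, hf2⟩
    obtain ⟨u, v, huv⟩ := Ideal.mem_span_pair.mp hf1
    obtain ⟨g, h, hgh⟩ := Ideal.mem_span_pair.mp hf2
    have hc := congrArg (piA K) (hgh.trans huv.symm)
    simp only [map_add, map_mul, map_sub, piA_X] at hc
    simp only [show (if V19.a = V19.a then (0 : MvPolynomial V19 K) else X V19.a) = 0 from rfl,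
      show (if V19.b = V19.a then (0 : MvPolynomial V19 K) else X V19.b) = B from rfl,
      show (if V19.c = V19.a then (0 : MvPolynomial V19 K) else X V19.c) = Cc from rfl,
      show (if V19.zeta = V19.a then (0 : MvPolynomial V19 K) else X V19.zeta) = Z from rfl,
      show (if V19.xi = V19.a then (0 : MvPolynomial V19 K) else X V19.xi) = Xi from rfl,
      ite_true, if_true, mul_zero, zero_mul, zero_add, zero_sub] at hc
    -- hc : (piA K) g * (B - Cc) + (piA K) h * -(Z * Xi) = (piA K) v * (Z * Xi)
    have h1 : Z * Xi ∣ (piA K) g := by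
      refine ZXi_dvd K ⟨(piA K) v + (piA K) h, ?_⟩
      linear_combination hc
    obtain ⟨t, ht⟩ := h1
    obtain ⟨s, hs⟩ := Ideal.mem_span_singleton'.mp (sub_pi_mem K g)
    have hg : g = s * A + (Z * Xi) * t := by rw [← ht]; linear_combination -hs
    have m1 : A * (B - Cc) ∈ Ideal.span {A * B - Z * Xi, A * Cc - Z * Xi} :=
      Ideal.mem_span_pair.mpr ⟨1, -1, by ring⟩
    have m2 : (Z * Xi) * (B - Cc) ∈ Ideal.span {A * B - Z * Xi, A * Cc - Z * Xi} :=
      Ideal.mem_span_pair.mpr ⟨Cc, -B, by ring⟩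
    have m3 : A * B - Z * Xi ∈ Ideal.span {A * B - Z * Xi, A * Cc - Z * Xi} :=
      Ideal.subset_span (Set.mem_insert _ _)
    have hf : f = s * (A * (B - Cc)) + t * ((Z * Xi) * (B - Cc)) + h * (A * B - Z * Xi) := by
      rw [← hgh, hg]; ring
    rw [hf]
    exact add_mem (add_mem (Ideal.mul_mem_left _ _ m1) (Ideal.mul_mem_left _ _ m2))
      (Ideal.mul_mem_left _ _ m3)

end Main

end N5Aux

/-- the join-meet ideal of the pentagon lattice `N₅`, generated by
`{x_a x_b − x_ζ x_ξ, x_a x_c − x_ζ x_ξ}`, is radical. -/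
theorem joinMeetIdeal_N5_isRadical (K : Type*) [Field K] :
    (Ideal.span
      ({X V19.a * X V19.b - X V19.zeta * X V19.xi,
        X V19.a * X V19.c - X V19.zeta * X V19.xi} :
        Set (MvPolynomial V19 K))).IsRadical := by
  rw [N5Aux.span_eq_inf]
  exact (N5Aux.hP1 K).inf (N5Aux.hP2 K)
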